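/- arXiv:1703.09029 — 2 statements merged into one kernel-verified Lean document; each statement's English description precedes it below -/
import Mathlib

section
/- Let H ∈ ℂ^{N_r × N_s}, B ∈ ℂ^{N_s × N_b}, G ∈ ℂ^{N_d × N_r}, T̃ ∈ ℂ^{N_r × N_b}, σ_r > 0, and let Ψ_bar be a Hermitian positive semidefinite N_r × N_r matrix. Define Ψ := Ψ_bar + H B B^H H^H + σ_r² I_{N_r} and Ψ_k̄ := Ψ − H B B^H H^H = Ψ_bar + σ_r² I_{N_r} (both Hermitian positive definite). Suppose the N_b × N_b matrices M := B^H H^H Ψ^{-1} H B and T̃^H G^H G T̃ are invertible, and set F := T̃ B^H H^H Ψ^{-1}. Then, with destination noise variance normalized to 1, tr( I_{N_b} − B^H H^H F^H G^H (G F Ψ F^H G^H + I_{N_d})^{-1} G F H B ) = tr( ( I_{N_b} + B^H H^H Ψ_k̄^{-1} H B )^{-1} ) + tr( ( M^{-1} + T̃^H G^H G T̃ )^{-1} ). -/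
/-!
Write `b = H B` and `C = G T`. Since `Ψ = Ψk + b bᴴ`, the Woodbury identity gives
`(1 + bᴴ Ψk⁻¹ b)⁻¹ = 1 - M`, and applied to `M⁻¹ + Cᴴ C` it gives
`(M⁻¹ + Cᴴ C)⁻¹ = M - M Cᴴ (1 + C M Cᴴ)⁻¹ C M`. For `F = T bᴴ Ψ⁻¹` we have `F Ψ Fᴴ = T M Tᴴ`
and `F b = T M`, so the MSE matrix itself is `1 - M Cᴴ (1 + C M Cᴴ)⁻¹ C M`, the sum of the two
inverses; the trace identity follows by linearity. Positive definiteness of `Ψk`, `Ψ` and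
`1 + C M Cᴴ` supplies the invertibility that Woodbury needs.
-/

open Matrix
open scoped ComplexOrder

namespace Matrix

variable {k m n α : Type*} [Fintype k] [Fintype m] [Fintype n] [DecidableEq m] [DecidableEq n]
  [CommRing α]

theorem inv_one_add_mul_inv_mul {C : Matrix n n α} (U : Matrix n m α) (V : Matrix m n α)
    (hC : IsUnit C) (hCUV : IsUnit (C + U * V)) :
    (1 + V * C⁻¹ * U)⁻¹ = 1 - V * (C + U * V)⁻¹ * U := by
  have hCC : C⁻¹⁻¹ = C := nonsing_inv_nonsing_inv _ ((isUnit_iff_isUnit_det C).mp hC)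
  simpa only [hCC, inv_one, Matrix.mul_one, Matrix.one_mul] using
    add_mul_mul_inv_eq_sub 1 V C⁻¹ U isUnit_one (isUnit_nonsing_inv_iff.mpr hC)
      (by simpa only [hCC, inv_one, Matrix.mul_one] using hCUV)

theorem inv_inv_add_mul {A : Matrix n n α} (U : Matrix n m α) (V : Matrix m n α)
    (hA : IsUnit A) (hVAU : IsUnit (1 + V * A * U)) :
    (A⁻¹ + U * V)⁻¹ = A - A * U * (1 + V * A * U)⁻¹ * V * A := by
  have hAA : A⁻¹⁻¹ = A := nonsing_inv_nonsing_inv _ ((isUnit_iff_isUnit_det A).mp hA)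
  simpa only [hAA, inv_one, Matrix.mul_one] using
    add_mul_mul_inv_eq_sub A⁻¹ U 1 V (isUnit_nonsing_inv_iff.mpr hA) isUnit_one
      (by simpa only [hAA, inv_one] using hVAU)

theorem relay_mmse_term_eq [StarRing α] {Ψ F : Matrix n n α} (hΨ : IsUnit Ψ)
    (hΨh : Ψ.IsHermitian) (A T : Matrix n k α) (G : Matrix m n α) (hF : F = T * Aᴴ * Ψ⁻¹) :
    Aᴴ * Fᴴ * Gᴴ * (G * F * Ψ * Fᴴ * Gᴴ + 1)⁻¹ * G * F * A
      = Aᴴ * Ψ⁻¹ * A * (G * T)ᴴ * (1 + G * T * (Aᴴ * Ψ⁻¹ * A) * (G * T)ᴴ)⁻¹ * (G * T)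
          * (Aᴴ * Ψ⁻¹ * A) := by
  have hFH : Fᴴ = Ψ⁻¹ * A * Tᴴ := by
    rw [hF, conjTranspose_mul, conjTranspose_mul, hΨh.inv.eq, conjTranspose_conjTranspose,
      Matrix.mul_assoc]
  rw [hFH, hF, add_comm]
  simp only [conjTranspose_mul, Matrix.mul_assoc,
    nonsing_inv_mul_cancel_left _ _ ((isUnit_iff_isUnit_det Ψ).mp hΨ)]

end Matrix

theorem mse_decomposition_general
    {Nr Ns Nb Nd : ℕ}
    (H : Matrix (Fin Nr) (Fin Ns) ℂ) (B : Matrix (Fin Ns) (Fin Nb) ℂ)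
    (G : Matrix (Fin Nd) (Fin Nr) ℂ) (T : Matrix (Fin Nr) (Fin Nb) ℂ)
    (σr : ℝ) (hσr : 0 < σr)
    (Ψbar : Matrix (Fin Nr) (Fin Nr) ℂ) (hΨbar : Ψbar.PosSemidef)
    (Ψ Ψk : Matrix (Fin Nr) (Fin Nr) ℂ)
    (hΨ : Ψ = Ψbar + H * B * Bᴴ * Hᴴ + ((σr ^ 2 : ℝ) : ℂ) • (1 : Matrix (Fin Nr) (Fin Nr) ℂ))
    (hΨk : Ψk = Ψbar + ((σr ^ 2 : ℝ) : ℂ) • (1 : Matrix (Fin Nr) (Fin Nr) ℂ))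
    (M : Matrix (Fin Nb) (Fin Nb) ℂ) (hM : M = Bᴴ * Hᴴ * Ψ⁻¹ * H * B)
    (hMinv : IsUnit M)
    (F : Matrix (Fin Nr) (Fin Nr) ℂ) (hF : F = T * Bᴴ * Hᴴ * Ψ⁻¹) :
    ((1 : Matrix (Fin Nb) (Fin Nb) ℂ)
        - Bᴴ * Hᴴ * Fᴴ * Gᴴ * (G * F * Ψ * Fᴴ * Gᴴ + 1)⁻¹ * G * F * H * B).trace
      = (((1 : Matrix (Fin Nb) (Fin Nb) ℂ) + Bᴴ * Hᴴ * Ψk⁻¹ * H * B)⁻¹).trace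
        + ((M⁻¹ + Tᴴ * Gᴴ * G * T)⁻¹).trace := by
  have hΨk_pd : Ψk.PosDef := hΨk ▸ PosDef.posSemidef_add hΨbar (PosDef.one.smul (by positivity))
  have hΨ_eq : Ψ = Ψk + H * B * (H * B)ᴴ := by
    rw [hΨ, hΨk, conjTranspose_mul, add_right_comm]
    simp only [Matrix.mul_assoc]
  have hΨ_pd : Ψ.PosDef := hΨ_eq ▸ hΨk_pd.add_posSemidef (posSemidef_self_mul_conjTranspose _)
  have hM' : M = (H * B)ᴴ * Ψ⁻¹ * (H * B) := by
    rw [hM, conjTranspose_mul]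
    simp only [Matrix.mul_assoc]
  have hM_psd : M.PosSemidef := hM' ▸ hΨ_pd.inv.posSemidef.conjTranspose_mul_mul_same (H * B)
  have first_hop : (1 + Bᴴ * Hᴴ * Ψk⁻¹ * H * B)⁻¹ = 1 - M := by
    have h := inv_one_add_mul_inv_mul (H * B) (H * B)ᴴ hΨk_pd.isUnit (hΨ_eq ▸ hΨ_pd.isUnit)
    rw [← hΨ_eq, ← hM'] at h
    simpa only [conjTranspose_mul, Matrix.mul_assoc] using h
  have second_hop : (M⁻¹ + Tᴴ * Gᴴ * G * T)⁻¹
      = M - M * (G * T)ᴴ * (1 + G * T * M * (G * T)ᴴ)⁻¹ * (G * T) * M := by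
    have hW : (1 + G * T * M * (G * T)ᴴ).PosDef :=
      PosDef.one.add_posSemidef (hM_psd.mul_mul_conjTranspose_same (G * T))
    simpa only [conjTranspose_mul, Matrix.mul_assoc] using
      inv_inv_add_mul (G * T)ᴴ (G * T) hMinv hW.isUnit
  have relay : Bᴴ * Hᴴ * Fᴴ * Gᴴ * (G * F * Ψ * Fᴴ * Gᴴ + 1)⁻¹ * G * F * H * B
      = M * (G * T)ᴴ * (1 + G * T * M * (G * T)ᴴ)⁻¹ * (G * T) * M := by
    have h := relay_mmse_term_eq (F := F) hΨ_pd.isUnit hΨ_pd.isHermitian (H * B) T G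
      (by rw [hF, conjTranspose_mul, Matrix.mul_assoc T])
    rw [← hM'] at h
    simpa only [conjTranspose_mul, Matrix.mul_assoc] using h
  rw [← trace_add, first_hop, second_hop, sub_add_sub_cancel, relay]

/-- Theorem 2: for a relay matrix of the optimal structure `F = T̃ Bᴴ Hᴴ Ψ⁻¹`, the
MMSE of the k-th destination decomposes into the first-hop MSE plus a second-hop
term depending on `T̃`. -/
theorem mse_decomposition
    {Nr Ns Nb Nd : ℕ}
    (H : Matrix (Fin Nr) (Fin Ns) ℂ) (B : Matrix (Fin Ns) (Fin Nb) ℂ)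
    (G : Matrix (Fin Nd) (Fin Nr) ℂ) (T : Matrix (Fin Nr) (Fin Nb) ℂ)
    (σr : ℝ) (hσr : 0 < σr)
    (Ψbar : Matrix (Fin Nr) (Fin Nr) ℂ) (hΨbar : Ψbar.PosSemidef)
    (Ψ Ψk : Matrix (Fin Nr) (Fin Nr) ℂ)
    (hΨ : Ψ = Ψbar + H * B * Bᴴ * Hᴴ + ((σr ^ 2 : ℝ) : ℂ) • (1 : Matrix (Fin Nr) (Fin Nr) ℂ))
    (hΨk : Ψk = Ψbar + ((σr ^ 2 : ℝ) : ℂ) • (1 : Matrix (Fin Nr) (Fin Nr) ℂ))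
    (M : Matrix (Fin Nb) (Fin Nb) ℂ) (hM : M = Bᴴ * Hᴴ * Ψ⁻¹ * H * B)
    (hMinv : IsUnit M) (hTinv : IsUnit (Tᴴ * Gᴴ * G * T))
    (F : Matrix (Fin Nr) (Fin Nr) ℂ) (hF : F = T * Bᴴ * Hᴴ * Ψ⁻¹) :
    ((1 : Matrix (Fin Nb) (Fin Nb) ℂ)
        - Bᴴ * Hᴴ * Fᴴ * Gᴴ * (G * F * Ψ * Fᴴ * Gᴴ + 1)⁻¹ * G * F * H * B).trace
      = (((1 : Matrix (Fin Nb) (Fin Nb) ℂ) + Bᴴ * Hᴴ * Ψk⁻¹ * H * B)⁻¹).trace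
        + ((M⁻¹ + Tᴴ * Gᴴ * G * T)⁻¹).trace :=
  mse_decomposition_general H B G T σr hσr Ψbar hΨbar Ψ Ψk hΨ hΨk M hM hMinv F hF
end

section
/- Let Ψ be a Hermitian positive definite N_r × N_r matrix, H ∈ ℂ^{N_r × N_s}, B ∈ ℂ^{N_s × N_b}, G ∈ ℂ^{N_d × N_r}, and T̃ ∈ ℂ^{N_r × N_b}. Set F := T̃ B^H H^H Ψ^{-1}, and assume the N_b × N_b matrices M := B^H H^H Ψ^{-1} H B and T̃^H G^H G T̃ are invertible. Then tr( B^H H^H ( Ψ F^H G^H G F Ψ + Ψ )^{-1} H B ) = tr( ( M^{-1} + T̃^H G^H G T̃ )^{-1} ). -/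
open Matrix
open scoped ComplexOrder

/-!
With `X = H B` and `K = T̃ᴴ Gᴴ G T̃`, the structured relay matrix turns `Ψ Fᴴ Gᴴ G F Ψ` into
`X K Xᴴ`, and `M = Xᴴ Ψ⁻¹ X`. The traced matrices then already agree: this is the push-through
identity `Xᴴ (X K Xᴴ + Ψ)⁻¹ X = (M⁻¹ + K)⁻¹`, valid once `Ψ`, `M` and `X K Xᴴ + Ψ` are invertible;
the last is positive definite because `K` is positive semidefinite.
-/

namespace Matrix

variable {l m n R : Type*} [Fintype l] [Fintype m] [Fintype n]

/-- With `M = Y Ψ⁻¹ X`, the matrix `Ψ⁻¹ X M⁻¹` is carried by `X K Y + Ψ` to `X (M⁻¹ + K)`, so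
`Y (X K Y + Ψ)⁻¹ X` is a left inverse of `M⁻¹ + K`. -/
theorem mul_inv_add_mul_mul_eq_inv_inv_add [DecidableEq m] [DecidableEq n] [CommRing R]
    (Ψ : Matrix m m R) (X : Matrix m n R) (K : Matrix n n R) (Y : Matrix n m R)
    (hΨ : IsUnit Ψ) (hM : IsUnit (Y * Ψ⁻¹ * X)) (hP : IsUnit (X * K * Y + Ψ)) :
    Y * (X * K * Y + Ψ)⁻¹ * X = ((Y * Ψ⁻¹ * X)⁻¹ + K)⁻¹ := by
  have hΨdet : IsUnit Ψ.det := (isUnit_iff_isUnit_det Ψ).mp hΨ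
  have hMdet : IsUnit (Y * Ψ⁻¹ * X).det := (isUnit_iff_isUnit_det _).mp hM
  have hPdet : IsUnit (X * K * Y + Ψ).det := (isUnit_iff_isUnit_det _).mp hP
  have hMM : Y * (Ψ⁻¹ * (X * (Y * Ψ⁻¹ * X)⁻¹)) = 1 := by
    rw [← Matrix.mul_assoc, ← Matrix.mul_assoc, mul_nonsing_inv _ hMdet]
  have hPΨ : (X * K * Y + Ψ) * (Ψ⁻¹ * X * (Y * Ψ⁻¹ * X)⁻¹) = X * ((Y * Ψ⁻¹ * X)⁻¹ + K) := by
    rw [Matrix.add_mul, Matrix.mul_assoc Ψ⁻¹, Matrix.mul_assoc (X * K), hMM,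
      Matrix.mul_one, mul_nonsing_inv_cancel_left _ _ hΨdet, Matrix.mul_add, add_comm]
  have hPX : (X * K * Y + Ψ)⁻¹ * X * ((Y * Ψ⁻¹ * X)⁻¹ + K) = Ψ⁻¹ * X * (Y * Ψ⁻¹ * X)⁻¹ := by
    rw [Matrix.mul_assoc, ← hPΨ, nonsing_inv_mul_cancel_left _ _ hPdet]
  refine (inv_eq_left_inv ?_).symm
  rw [Matrix.mul_assoc Y, Matrix.mul_assoc, hPX, ← Matrix.mul_assoc, ← Matrix.mul_assoc,
    mul_nonsing_inv _ hMdet]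

theorem posSemidef_conjTranspose_mul_conjTranspose_mul_mul [RCLike R] (T : Matrix m n R)
    (G : Matrix l m R) : (Tᴴ * Gᴴ * G * T).PosSemidef := by
  simpa only [conjTranspose_mul, Matrix.mul_assoc] using posSemidef_conjTranspose_mul_self (G * T)

theorem IsHermitian.mul_conjTranspose_mul_gram_mul_mul [DecidableEq m] [RCLike R]
    {Ψ : Matrix m m R} (hΨ : Ψ.IsHermitian) (hΨu : IsUnit Ψ) (X T : Matrix m n R)
    (G : Matrix l m R) :
    Ψ * (T * Xᴴ * Ψ⁻¹)ᴴ * Gᴴ * G * (T * Xᴴ * Ψ⁻¹) * Ψ = X * (Tᴴ * Gᴴ * G * T) * Xᴴ := by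
  have hdet : IsUnit Ψ.det := (isUnit_iff_isUnit_det Ψ).mp hΨu
  simp only [conjTranspose_mul, conjTranspose_nonsing_inv, hΨ.eq, conjTranspose_conjTranspose,
    Matrix.mul_assoc, mul_nonsing_inv_cancel_left _ _ hdet, nonsing_inv_mul _ hdet, Matrix.mul_one]

end Matrix

theorem second_hop_mse_term_general
    {Nr Ns Nb Nd : ℕ}
    (Ψ : Matrix (Fin Nr) (Fin Nr) ℂ) (hΨ : Ψ.PosDef)
    (H : Matrix (Fin Nr) (Fin Ns) ℂ) (B : Matrix (Fin Ns) (Fin Nb) ℂ)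
    (G : Matrix (Fin Nd) (Fin Nr) ℂ) (T : Matrix (Fin Nr) (Fin Nb) ℂ)
    (F : Matrix (Fin Nr) (Fin Nr) ℂ) (hF : F = T * Bᴴ * Hᴴ * Ψ⁻¹)
    (M : Matrix (Fin Nb) (Fin Nb) ℂ) (hM : M = Bᴴ * Hᴴ * Ψ⁻¹ * H * B)
    (hMinv : IsUnit M) :
    (Bᴴ * Hᴴ * (Ψ * Fᴴ * Gᴴ * G * F * Ψ + Ψ)⁻¹ * H * B).trace
      = ((M⁻¹ + Tᴴ * Gᴴ * G * T)⁻¹).trace := by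
  have hF' : F = T * (H * B)ᴴ * Ψ⁻¹ := by rw [hF, conjTranspose_mul, Matrix.mul_assoc T]
  have hM' : M = (H * B)ᴴ * Ψ⁻¹ * (H * B) := by
    simp only [hM, conjTranspose_mul, Matrix.mul_assoc]
  have hP : ((H * B) * (Tᴴ * Gᴴ * G * T) * (H * B)ᴴ + Ψ).PosDef :=
    PosDef.posSemidef_add
      ((posSemidef_conjTranspose_mul_conjTranspose_mul_mul T G).mul_mul_conjTranspose_same _) hΨ
  rw [hF', hΨ.isHermitian.mul_conjTranspose_mul_gram_mul_mul hΨ.isUnit, hM',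
    ← mul_inv_add_mul_mul_eq_inv_inv_add _ _ _ _ hΨ.isUnit (hM' ▸ hMinv) hP.isUnit]
  simp only [conjTranspose_mul, Matrix.mul_assoc]

/-- Second-hop term computation in the proof of Theorem 2: substituting the
structured relay matrix `F = T̃ Bᴴ Hᴴ Ψ⁻¹` into the residual MSE term yields
`tr ((Bᴴ Hᴴ Ψ⁻¹ H B)⁻¹ + T̃ᴴ Gᴴ G T̃)⁻¹`. -/
theorem second_hop_mse_term
    {Nr Ns Nb Nd : ℕ}
    (Ψ : Matrix (Fin Nr) (Fin Nr) ℂ) (hΨ : Ψ.PosDef)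
    (H : Matrix (Fin Nr) (Fin Ns) ℂ) (B : Matrix (Fin Ns) (Fin Nb) ℂ)
    (G : Matrix (Fin Nd) (Fin Nr) ℂ) (T : Matrix (Fin Nr) (Fin Nb) ℂ)
    (F : Matrix (Fin Nr) (Fin Nr) ℂ) (hF : F = T * Bᴴ * Hᴴ * Ψ⁻¹)
    (M : Matrix (Fin Nb) (Fin Nb) ℂ) (hM : M = Bᴴ * Hᴴ * Ψ⁻¹ * H * B)
    (hMinv : IsUnit M) (hTinv : IsUnit (Tᴴ * Gᴴ * G * T)) :
    (Bᴴ * Hᴴ * (Ψ * Fᴴ * Gᴴ * G * F * Ψ + Ψ)⁻¹ * H * B).trace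
      = ((M⁻¹ + Tᴴ * Gᴴ * G * T)⁻¹).trace :=
  second_hop_mse_term_general Ψ hΨ H B G T F hF M hM hMinv
end
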